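/- arXiv:2602.13505 — 2 statements merged into one kernel-verified Lean document; each statement's English description precedes it below -/
import Mathlib

section
/- (Theorem 1(ii), precise form) Let M ≥ 0 and let T₁, …, T_k ⊆ {0, 1, …, M} be finite sets with indicator polynomials h_i = Σ_{t ∈ T_i} D^t ∈ F₂[D, D⁻¹]. Let π be a permutation of {1, …, k} with π ∘ π = id such that for every fixed point i of π the support set satisfies {M − t : t ∈ T_i} = T_i. Define z_i = D^M · invert(h_{π(i)}) for each i, and form the systematic row vectors X = (h₁, …, h_k, 1) and Z = (z₁, …, z_k, 1). Then X and Z are symplectically orthogonal: Σ_{j=1}^{k+1} (X_j · invert(Z_j) + Z_j · invert(X_j)) = 0 in F₂[D, D⁻¹]. -/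
open LaurentPolynomial

/-
The `i`-th summand is `aᵢ + invert(aᵢ)` with `aᵢ = hᵢ · invert(zᵢ) = D^{-M} hᵢ h_{π(i)}`, and the
last one is `1 + 1 = 0`. Since `a_{π(i)} = aᵢ`, the summands at `i` and `π(i)` cancel in
characteristic two. At a fixed point, reflection invariance of the support says
`invert(hᵢ) = D^{-M} hᵢ`, i.e. `zᵢ = hᵢ`, so the summand is `2 hᵢ invert(hᵢ) = 0`.
-/

namespace LaurentPolynomial

instance charP {R : Type*} [CommRing R] (p : ℕ) [CharP R p] : CharP R[T;T⁻¹] p :=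
  charP_of_injective_algebraMap' R p

variable {R : Type*} [CommSemiring R]

theorem invert_T_mul_invert (n : ℤ) (f : R[T;T⁻¹]) : invert (T n * invert f) = T (-n) * f := by
  rw [map_mul, invert_T, involutive_invert f]

theorem invert_sum_T_of_image_sub_eq (M : ℤ) (S : Finset ℤ) (hS : S.image (M - ·) = S) :
    invert (∑ t ∈ S, T t : R[T;T⁻¹]) = T (-M) * ∑ t ∈ S, T t := by
  rw [map_sum, Finset.mul_sum]
  conv_rhs => rw [← hS, Finset.sum_image (fun x _ y _ hxy => sub_right_injective hxy)]
  refine Finset.sum_congr rfl fun t _ => ?_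
  rw [invert_T, ← T_add]
  congr 1
  ring

theorem T_mul_invert_eq_self_of_invert_eq {n : ℤ} {f : R[T;T⁻¹]} (hf : invert f = T (-n) * f) :
    T n * invert f = f := by
  rw [hf, ← mul_assoc, ← T_add, add_neg_cancel, T_zero, one_mul]

end LaurentPolynomial

theorem Fintype.sum_eq_zero_of_involutive_of_charTwo {ι R : Type*} [Fintype ι] [Ring R]
    [CharP R 2] (σ : ι → ι) (hσ : Function.Involutive σ) (f : ι → R)
    (hf : ∀ i, f (σ i) = f i) (hfix : ∀ i, σ i = i → f i = 0) : ∑ i, f i = 0 :=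
  Finset.sum_ninvolution σ (fun i => by rw [hf, CharTwo.add_self_eq_zero])
    (fun i hi hσi => hi (hfix i hσi)) (fun _ => Finset.mem_univ _) hσ

theorem reflected_rows_symplectically_orthogonal_general (M : ℕ) (k : ℕ)
    (T : Fin k → Finset ℤ)
    (h : Fin k → LaurentPolynomial (ZMod 2))
    (hh : ∀ i, h i = ∑ t ∈ T i, LaurentPolynomial.T t)
    (π : Equiv.Perm (Fin k)) (hinv : ∀ i, π (π i) = i)
    (hfix : ∀ i, π i = i → (T i).image (fun t => (M : ℤ) - t) = T i)
    (z : Fin k → LaurentPolynomial (ZMod 2))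
    (hz : ∀ i, z i = LaurentPolynomial.T (M : ℤ) * LaurentPolynomial.invert (h (π i)))
    (X Z : Fin (k + 1) → LaurentPolynomial (ZMod 2))
    (hX : X = Fin.snoc h 1) (hZ : Z = Fin.snoc z 1) :
    (∑ j, (X j * LaurentPolynomial.invert (Z j) +
        Z j * LaurentPolynomial.invert (X j))) = 0 := by
  subst hX hZ
  simp only [Fin.sum_univ_castSucc, Fin.snoc_castSucc, Fin.snoc_last, map_one, mul_one,
    CharTwo.add_self_eq_zero, add_zero]
  refine Fintype.sum_eq_zero_of_involutive_of_charTwo π hinv _ (fun i => ?_) (fun i hi => ?_)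
  · rw [hz, hz, hinv, invert_T_mul_invert, invert_T_mul_invert]
    ring
  · have hrefl := invert_sum_T_of_image_sub_eq (R := ZMod 2) _ _ (hfix i hi)
    rw [← hh] at hrefl
    rw [hz, hi, T_mul_invert_eq_self_of_invert_eq hrefl, CharTwo.add_self_eq_zero]

/-- Theorem 1(ii), precise form: let `T₁, …, T_k ⊆ {0, …, M}` with indicator
polynomials `h_i = Σ_{t ∈ T_i} D^t` over `F₂`, let `π` be an involutive permutation of
the indices such that every fixed point `i` of `π` has reflection-invariant support
`{M − t : t ∈ T_i} = T_i`, and set `z_i = D^M · invert(h_{π(i)})`. Then the systematic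
row vectors `X = (h₁, …, h_k, 1)` and `Z = (z₁, …, z_k, 1)` are symplectically
orthogonal: `Σ_j (X_j · invert(Z_j) + Z_j · invert(X_j)) = 0`. -/
theorem reflected_rows_symplectically_orthogonal (M : ℕ) (k : ℕ)
    (T : Fin k → Finset ℤ)
    (hsub : ∀ i, T i ⊆ Finset.Icc 0 (M : ℤ))
    (h : Fin k → LaurentPolynomial (ZMod 2))
    (hh : ∀ i, h i = ∑ t ∈ T i, LaurentPolynomial.T t)
    (π : Equiv.Perm (Fin k)) (hinv : ∀ i, π (π i) = i)
    (hfix : ∀ i, π i = i → (T i).image (fun t => (M : ℤ) - t) = T i)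
    (z : Fin k → LaurentPolynomial (ZMod 2))
    (hz : ∀ i, z i = LaurentPolynomial.T (M : ℤ) * LaurentPolynomial.invert (h (π i)))
    (X Z : Fin (k + 1) → LaurentPolynomial (ZMod 2))
    (hX : X = Fin.snoc h 1) (hZ : Z = Fin.snoc z 1) :
    (∑ j, (X j * LaurentPolynomial.invert (Z j) +
        Z j * LaurentPolynomial.invert (X j))) = 0 :=
  reflected_rows_symplectically_orthogonal_general M k T h hh π hinv hfix z hz X Z hX hZ
end

section
/- (Free distance of DTS-based systematic convolutional codes) Let w ≥ 1 and let T₁, …, T_k be finite sets of integers, each of size w, such that each positive difference set Δ⁺(T_i) has exactly w(w−1)/2 elements and the sets Δ⁺(T₁), …, Δ⁺(T_k) are pairwise disjoint. Let h_i = Σ_{t ∈ T_i} D^t ∈ F₂[D, D⁻¹]. Consider all nonzero codewords, i.e., tuples (c₁, …, c_k, c_{k+1}) ∈ F₂[D, D⁻¹]^{k+1}, not all zero, satisfying Σ_{i=1}^k h_i · c_i + c_{k+1} = 0. Then the minimum over all such nonzero codewords of the total Hamming weight Σ_{j=1}^{k+1} wt(c_j) equals w + 1, where wt(c) is the number of nonzero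 coefficients of the Laurent polynomial c. -/
open LaurentPolynomial

/-!
The codeword `(e_i, -h_i)` has weight `1 + #T_i = w + 1`. Conversely, let `(x j).coeff a ≠ 0` for an
information component `x j`. For each `t ∈ T_j`, the term `x_j(a)` of the coefficient of `D^(a+t)`
in the parity equation must be cancelled, either by the parity component at `a + t` or by another
term `x_i(a + t - s)` with `s ∈ T_i`. In a strong difference triangle set all positive differences
are distinct, so distinct `t` are charged to distinct nonzero coefficients other than `x_j(a)`:
together with `x_j(a)` this gives at least `w + 1` nonzero coefficients.
-/

/-- The positive difference set of a finite set of integers: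
`Δ⁺(T) = {t' − t : t, t' ∈ T, t' > t}`. -/
def posDiff (T : Finset ℤ) : Finset ℤ :=
  ((T ×ˢ T).filter (fun p => p.1 < p.2)).image (fun p => p.2 - p.1)

/-- The Hamming weight of a Laurent polynomial over `F₂`: the number of its nonzero
coefficients. -/
noncomputable def wt (c : LaurentPolynomial (ZMod 2)) : ℕ := c.coeff.support.card

open Finset

lemma mem_posDiff {T : Finset ℤ} {d : ℤ} :
    d ∈ posDiff T ↔ ∃ t ∈ T, ∃ t' ∈ T, t < t' ∧ t' - t = d := by
  simp [posDiff, and_assoc]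

lemma injOn_sub_of_card_posDiff {T : Finset ℤ} (hT : #(posDiff T) = #T * (#T - 1) / 2) :
    Set.InjOn (fun p : ℤ × ℤ => p.2 - p.1) ({p ∈ T ×ˢ T | p.1 < p.2} : Finset (ℤ × ℤ)) := by
  rw [← card_image_iff, ← posDiff, hT, card_product_filter_lt, Nat.choose_two_right]

/-- The difference property of a strong difference triangle set. -/
def HasDistinctDifferences {ι : Type*} (T : ι → Finset ℤ) : Prop :=
  ∀ ⦃i j t t' s s'⦄, t ∈ T i → t' ∈ T i → s ∈ T j → s' ∈ T j → t ≠ t' → t - t' = s - s' →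
    i = j ∧ t = s

lemma hasDistinctDifferences_of_posDiff {ι : Type*} (T : ι → Finset ℤ)
    (hfull : ∀ i, #(posDiff (T i)) = #(T i) * (#(T i) - 1) / 2)
    (hdisj : Pairwise fun i j ↦ Disjoint (posDiff (T i)) (posDiff (T j))) :
    HasDistinctDifferences T := by
  have of_lt : ∀ ⦃i j t t' s s'⦄, t ∈ T i → t' ∈ T i → s ∈ T j → s' ∈ T j → t' < t →
      t - t' = s - s' → i = j ∧ t = s := by
    intro i j t t' s s' ht ht' hs hs' hlt hd
    have hi : t - t' ∈ posDiff (T i) := mem_posDiff.2 ⟨t', ht', t, ht, hlt, rfl⟩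
    have hj : t - t' ∈ posDiff (T j) := mem_posDiff.2 ⟨s', hs', s, hs, by omega, hd.symm⟩
    obtain rfl : i = j := by_contra fun hij ↦ disjoint_left.1 (hdisj hij) hi hj
    have := injOn_sub_of_card_posDiff (hfull i) (by simp [ht, ht', hlt] : (t', t) ∈ _)
      (by simp [hs, hs']; omega : (s', s) ∈ _) hd
    exact ⟨rfl, (Prod.ext_iff.1 this).2⟩
  intro i j t t' s s' ht ht' hs hs' hne hd
  rcases hne.lt_or_gt with hlt | hlt
  · obtain ⟨rfl, rfl⟩ := of_lt ht' ht hs' hs hlt (by omega)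
    exact ⟨rfl, by omega⟩
  · exact of_lt ht ht' hs hs' hlt hd

section Weights

variable {R : Type*} [Semiring R]

lemma LaurentPolynomial.coeff_T_mul (t n : ℤ) (f : R[T;T⁻¹]) :
    (T t * f).coeff n = f.coeff (n - t) := by
  rw [T, AddMonoidAlgebra.coeff_single_mul_apply, one_mul, neg_add_eq_sub]

lemma LaurentPolynomial.support_sum_T [Nontrivial R] (s : Finset ℤ) :
    (∑ t ∈ s, (T t : R[T;T⁻¹])).coeff.support = s := by
  ext n
  simp [AddMonoidAlgebra.coeff_sum]

lemma LaurentPolynomial.coeff_sum_T_mul (s : Finset ℤ) (f : R[T;T⁻¹]) (n : ℤ) :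
    ((∑ t ∈ s, T t) * f).coeff n = ∑ t ∈ s, f.coeff (n - t) := by
  simp only [sum_mul, AddMonoidAlgebra.coeff_sum, Finsupp.coe_finsetSum, Finset.sum_apply,
    coeff_T_mul]

variable {ι : Type*} [Fintype ι] [DecidableEq ι] {S : ι → Finset ℤ} {x : ι → R[T;T⁻¹]}
  {y : R[T;T⁻¹]}

/-- A nonzero term `(x j).coeff a` of the coefficient of `D^(a + t)` that `y` does not cancel is
cancelled by another term of the convolution. -/
lemma exists_ne_coeff_ne_zero (hxy : ∑ i, (∑ t ∈ S i, T t) * x i + y = 0) {j : ι} {a t : ℤ}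
    (ha : (x j).coeff a ≠ 0) (ht : t ∈ S j) (hy : y.coeff (a + t) = 0) :
    ∃ p ∈ (univ.sigma S).erase ⟨j, t⟩, (x p.1).coeff (a + t - p.2) ≠ 0 := by
  have hcoeff : ∑ p ∈ univ.sigma S, (x p.1).coeff (a + t - p.2) = 0 := by
    have := congr(($hxy).coeff (a + t))
    simpa [AddMonoidAlgebra.coeff_sum, coeff_sum_T_mul, hy, sum_sigma] using this
  refine exists_ne_zero_of_sum_ne_zero fun h ↦ ha ?_
  rw [← add_sum_erase _ _ (by simpa using ht : (⟨j, t⟩ : Σ _ : ι, ℤ) ∈ univ.sigma S), h,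
    add_zero] at hcoeff
  simpa using hcoeff

theorem card_add_one_le_weight (hT : HasDistinctDifferences S)
    (hxy : ∑ i, (∑ t ∈ S i, T t) * x i + y = 0) {j : ι} (hx : x j ≠ 0) :
    #(S j) + 1 ≤ ∑ i, #(x i).coeff.support + #y.coeff.support := by
  obtain ⟨a, ha⟩ : ∃ a, (x j).coeff a ≠ 0 := by
    simpa [AddMonoidAlgebra.ext_iff, DFunLike.ext_iff] using hx
  set A := univ.sigma fun i ↦ (x i).coeff.support
  have hjA : ⟨j, a⟩ ∈ A := by simpa [A] using ha
  -- `t` is charged to a nonzero coefficient at `D^(a + t)` other than `(x j).coeff a`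
  let charged (t : ℤ) : (Σ _ : ι, ℤ) ⊕ ℤ → Prop :=
    Sum.elim (fun p ↦ a + t - p.2 ∈ S p.1) (fun n ↦ n = a + t)
  have hcharge : #(S j) ≤ #((A.erase ⟨j, a⟩).disjSum y.coeff.support) := by
    refine card_le_card_of_forall_subsingleton charged (fun t ht ↦ ?_) ?_
    · by_cases hy : y.coeff (a + t) = 0
      · obtain ⟨⟨i, s⟩, hp, hs⟩ := exists_ne_coeff_ne_zero hxy ha ht hy
        have hsS : s ∈ S i := (mem_sigma.1 (mem_of_mem_erase hp)).2
        refine ⟨.inl ⟨i, a + t - s⟩, ?_, by simpa [charged] using hsS⟩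
        simp only [inl_mem_disjSum, mem_erase, A, mem_sigma, mem_univ, true_and,
          Finsupp.mem_support_iff]
        refine ⟨fun heq ↦ (mem_erase.1 hp).1 ?_, hs⟩
        simp only [Sigma.mk.injEq, heq_eq_eq] at heq ⊢
        exact ⟨heq.1, by omega⟩
      · exact ⟨.inr (a + t), by simpa using hy, rfl⟩
    · rintro (⟨i, b⟩ | n) hb t₁ ⟨ht₁, hb₁⟩ t₂ ⟨ht₂, hb₂⟩
      · by_contra hne
        obtain ⟨rfl, h⟩ := hT ht₁ ht₂ hb₁ hb₂ hne (by omega)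
        obtain rfl : b = a := by simp only at h; omega
        simp at hb
      · simp only [charged, Sum.elim_inr] at hb₁ hb₂
        omega
  have hAcard : #A = ∑ i, #(x i).coeff.support := card_sigma _ _
  rw [card_disjSum, card_erase_of_mem hjA, hAcard] at hcharge
  have : 0 < #A := card_pos.2 ⟨_, hjA⟩
  omega

end Weights

theorem dts_csoc_free_distance_general (w k : ℕ) (hk : 1 ≤ k)
    (T : Fin k → Finset ℤ)
    (hcard : ∀ i, (T i).card = w)
    (hfull : ∀ i, (posDiff (T i)).card = w * (w - 1) / 2)
    (hdisj : ∀ i j : Fin k, i ≠ j → Disjoint (posDiff (T i)) (posDiff (T j)))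
    (h : Fin k → LaurentPolynomial (ZMod 2))
    (hh : ∀ i, h i = ∑ t ∈ T i, LaurentPolynomial.T t) :
    IsLeast {d : ℕ | ∃ c : Fin (k + 1) → LaurentPolynomial (ZMod 2), c ≠ 0 ∧
        (∑ i : Fin k, h i * c i.castSucc) + c (Fin.last k) = 0 ∧
        d = ∑ j, wt (c j)} (w + 1) := by
  refine ⟨?_, ?_⟩
  · let i₀ : Fin k := ⟨0, hk⟩
    refine ⟨Fin.snoc (Pi.single i₀ 1) (-h i₀), fun hc ↦ ?_, ?_, ?_⟩
    · simpa using congr_fun hc i₀.castSucc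
    · simp [Pi.single_apply]
    · have hparity : wt (-h i₀) = w := by
        rw [wt, AddMonoidAlgebra.coeff_neg, Finsupp.support_neg, hh, support_sum_T, hcard]
      have hinfo : ∑ i, wt (Pi.single (M := fun _ ↦ (ZMod 2)[T;T⁻¹]) i₀ 1 i) = 1 := by
        simp [wt, Pi.single_apply, apply_ite]
      simp [Fin.sum_univ_castSucc, hparity, hinfo, add_comm]
  · rintro _ ⟨c, hc, hcode, rfl⟩
    obtain ⟨j, hj⟩ : ∃ j : Fin k, c j.castSucc ≠ 0 := by
      by_contra! hzero
      refine hc (funext (Fin.lastCases ?_ hzero))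
      simpa [hzero] using hcode
    have hT : HasDistinctDifferences T :=
      hasDistinctDifferences_of_posDiff T (by simp [hcard, hfull]) fun i j ↦ hdisj i j
    have := card_add_one_le_weight hT (by simpa [hh] using hcode) hj
    simpa [Fin.sum_univ_castSucc, wt, hcard] using this

/-- Free distance of DTS-based systematic convolutional codes: if `T₁, …, T_k` are
size-`w` sets of integers with `|Δ⁺(T_i)| = w(w−1)/2` and the `Δ⁺(T_i)` pairwise
disjoint (a strong DTS), and `h_i = Σ_{t ∈ T_i} D^t`, then the minimum total Hamming
weight of a nonzero codeword `(c₁, …, c_k, c_{k+1})` of the rate-`k/(k+1)` systematic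
code with parity-check row `(h₁, …, h_k, 1)` — i.e. satisfying
`Σ_i h_i · c_i + c_{k+1} = 0` — equals `w + 1`. -/
theorem dts_csoc_free_distance (w k : ℕ) (hw : 1 ≤ w) (hk : 1 ≤ k)
    (T : Fin k → Finset ℤ)
    (hcard : ∀ i, (T i).card = w)
    (hfull : ∀ i, (posDiff (T i)).card = w * (w - 1) / 2)
    (hdisj : ∀ i j : Fin k, i ≠ j → Disjoint (posDiff (T i)) (posDiff (T j)))
    (h : Fin k → LaurentPolynomial (ZMod 2))
    (hh : ∀ i, h i = ∑ t ∈ T i, LaurentPolynomial.T t) :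
    IsLeast {d : ℕ | ∃ c : Fin (k + 1) → LaurentPolynomial (ZMod 2), c ≠ 0 ∧
        (∑ i : Fin k, h i * c i.castSucc) + c (Fin.last k) = 0 ∧
        d = ∑ j, wt (c j)} (w + 1) :=
  dts_csoc_free_distance_general w k hk T hcard hfull hdisj h hh
end
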